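/- Let R be an F-finite Noetherian ring of prime characteristic p, M an R-module, 𝔞 an ideal of R and e ≥ 0 an integer. Then I_e(𝔞, M) ⊇ I_{e+1}(𝔞^{[p]}, M), where 𝔞^{[p]} is the ideal generated by p-th powers of elements of 𝔞. If moreover R is F-pure, then I_e(𝔞, M) = I_{e+1}(𝔞^{[p]}, M). -/

import Mathlib

/-!
Statement 13: For an F-finite Noetherian ring `R` of prime characteristic `p`, an
`R`-module `M`, an ideal `𝔞` and `e ≥ 0`, one has `I_e(𝔞, M) ⊇ I_{e+1}(𝔞^{[p]}, M)`;
if moreover `R` is F-pure, `I_e(𝔞, M) = I_{e+1}(𝔞^{[p]}, M)`.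
-/

universe u v

section Defs

/-- The submodule `I_e(𝔞, M) = Hom_R(ᵉR, M) · 𝔞 ⊆ M`.  An additive map `φ : R →+ M` is an
`R`-linear map `ᵉR → M` precisely when `φ (r ^ p ^ e * y) = r • φ y` for all `r, y ∈ R`. -/
def frobIe (p e : ℕ) (R : Type u) (M : Type v) [CommRing R] [AddCommGroup M]
    [Module R M] (a : Ideal R) : Submodule R M :=
  Submodule.span R
    {m | ∃ φ : R →+ M, (∀ r y : R, φ (r ^ p ^ e * y) = r • φ y) ∧ ∃ y ∈ a, φ y = m}

/-- The bracket power `𝔞^{[q]}`, generated by `q`-th powers of elements of `𝔞`. -/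
def bracketPow {R : Type u} [CommRing R] (a : Ideal R) (q : ℕ) : Ideal R :=
  Ideal.span ((fun x => x ^ q) '' a)

/-- `R` is F-finite: `¹R` is a finitely generated `R`-module. -/
def FFinite (p : ℕ) (R : Type u) [CommRing R] : Prop :=
  ∃ (n : ℕ) (g : Fin n → R), ∀ r : R, ∃ c : Fin n → R, r = ∑ i, c i ^ p * g i

/-- `R` is F-pure; for F-finite rings (as here) this is equivalent to Frobenius
splitting: there is an `R`-linear map `¹R → R` sending `1` to `1`. -/
def FPure (p : ℕ) (R : Type u) [CommRing R] : Prop :=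
  ∃ φ : R →+ R, (∀ r y : R, φ (r ^ p * y) = r * φ y) ∧ φ 1 = 1

end Defs

/-!
If `φ : ᵉ⁺¹R → M` is `R`-linear and `c ∈ R`, then `z ↦ φ (c z^p)` is `R`-linear on `ᵉR` (additivity of
Frobenius) and sends `x ∈ 𝔞` to `φ (c x^p)`; since `R`-multiples of `p`-th powers of elements of `𝔞` span
`𝔞^{[p]}`, this gives `I_{e+1}(𝔞^{[p]}, M) ⊆ I_e(𝔞, M)`. Conversely a Frobenius splitting `θ : ¹R → R`
turns `φ : ᵉR → M` into `φ ∘ θ : ᵉ⁺¹R → M` with `(φ ∘ θ)(x^p) = φ x`.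
-/

section FrobeniusLinear

variable {R : Type u} [CommRing R] {M : Type v} [AddCommGroup M] [Module R M] {p e : ℕ}

def IsFrobLinear (p e : ℕ) (φ : R →+ M) : Prop :=
  ∀ r y : R, φ (r ^ p ^ e * y) = r • φ y

theorem apply_mem_frobIe {φ : R →+ M} (hφ : IsFrobLinear p e φ) {a : Ideal R} {y : R}
    (hy : y ∈ a) : φ y ∈ frobIe p e R M a :=
  Submodule.subset_span ⟨φ, hφ, y, hy, rfl⟩

theorem IsFrobLinear.comp_mulLeft_frobenius [ExpChar R p] {φ : R →+ M}
    (hφ : IsFrobLinear p (e + 1) φ) (c : R) :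
    IsFrobLinear p e ((φ.comp (AddMonoidHom.mulLeft c)).comp (frobenius R p).toAddMonoidHom) := by
  intro r z
  have : c * (r ^ p ^ e * z) ^ p = r ^ p ^ (e + 1) * (c * z ^ p) := by ring
  simpa [frobenius_def, this] using hφ r (c * z ^ p)

theorem IsFrobLinear.apply_mul_mem_frobIe_of_mem_bracketPow [ExpChar R p]
    {φ : R →+ M} (hφ : IsFrobLinear p (e + 1) φ) {a : Ideal R} {y : R}
    (hy : y ∈ bracketPow a p) (c : R) : φ (c * y) ∈ frobIe p e R M a := by
  induction hy using Submodule.span_induction generalizing c with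
  | mem _ hx =>
    obtain ⟨x, hx, rfl⟩ := hx
    exact apply_mem_frobIe (hφ.comp_mulLeft_frobenius c) hx
  | zero => simp
  | add y z _ _ hy hz => simpa only [mul_add, map_add] using add_mem (hy c) (hz c)
  | smul r z _ hz => simpa only [smul_eq_mul, mul_assoc] using hz (c * r)

theorem frobIe_succ_bracketPow_le [ExpChar R p] (a : Ideal R) :
    frobIe p (e + 1) R M (bracketPow a p) ≤ frobIe p e R M a := by
  rw [frobIe, Submodule.span_le]
  rintro _ ⟨φ, hφ, y, hy, rfl⟩
  simpa using IsFrobLinear.apply_mul_mem_frobIe_of_mem_bracketPow hφ hy 1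

theorem IsFrobLinear.comp_splitting {θ : R →+ R} (hθ : ∀ r y : R, θ (r ^ p * y) = r * θ y)
    {φ : R →+ M} (hφ : IsFrobLinear p e φ) : IsFrobLinear p (e + 1) (φ.comp θ) := by
  intro r z
  simp only [AddMonoidHom.comp_apply, pow_succ, pow_mul, hθ]
  exact hφ r (θ z)

theorem le_frobIe_succ_bracketPow_of_fPure (hR : FPure p R) (a : Ideal R) :
    frobIe p e R M a ≤ frobIe p (e + 1) R M (bracketPow a p) := by
  obtain ⟨θ, hθ, hθ1⟩ := hR
  rw [frobIe, Submodule.span_le]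
  rintro _ ⟨φ, hφ, x, hx, rfl⟩
  have hθx : θ (x ^ p) = x := by simpa [hθ1] using hθ x 1
  have hxp : x ^ p ∈ bracketPow a p := Ideal.subset_span ⟨x, hx, rfl⟩
  have := apply_mem_frobIe (IsFrobLinear.comp_splitting hθ hφ) hxp
  rwa [AddMonoidHom.comp_apply, hθx] at this

end FrobeniusLinear

theorem stmt13_general {R : Type u} [CommRing R]
    (p : ℕ) (hp : p.Prime) [CharP R p]
    (M : Type v) [AddCommGroup M] [Module R M] (a : Ideal R) (e : ℕ) :
    frobIe p (e + 1) R M (bracketPow a p) ≤ frobIe p e R M a ∧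
    (FPure p R → frobIe p (e + 1) R M (bracketPow a p) = frobIe p e R M a) := by
  have : ExpChar R p := .prime hp
  have hle := frobIe_succ_bracketPow_le (p := p) (M := M) (e := e) a
  exact ⟨hle, fun hR => le_antisymm hle (le_frobIe_succ_bracketPow_of_fPure hR a)⟩

/-- Let `R` be an F-finite Noetherian ring of prime characteristic `p`,
`M` an `R`-module, `𝔞` an ideal of `R` and `e ≥ 0`.  Then
`I_e(𝔞, M) ⊇ I_{e+1}(𝔞^{[p]}, M)`.  If moreover `R` is F-pure, then
`I_e(𝔞, M) = I_{e+1}(𝔞^{[p]}, M)`. -/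
theorem stmt13 {R : Type u} [CommRing R] [IsNoetherianRing R]
    (p : ℕ) (hp : p.Prime) [CharP R p] (hFF : FFinite p R)
    (M : Type v) [AddCommGroup M] [Module R M] (a : Ideal R) (e : ℕ) :
    frobIe p (e + 1) R M (bracketPow a p) ≤ frobIe p e R M a ∧
    (FPure p R → frobIe p (e + 1) R M (bracketPow a p) = frobIe p e R M a) :=
  stmt13_general p hp M a e
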